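/- arXiv:1910.12482 — 4 statements merged into one kernel-verified Lean document; each statement's English description precedes it below -/
import Mathlib

section
/- Let n ∈ ℕ, let a₀ ≥ a₁ ≥ … ≥ a_{n-1} ≥ 0, and let l : {0,…,n-1} → {0,…,n-1} be any map. Define C(l) = ⌈ sup_{0 ≤ r < n} (1/(r+1)) · Card{k : l(k) ≤ r} ⌉. Then the distribution function of the tuple (a_{l(0)}, …, a_{l(n-1)}) satisfies d_{(a_{l(k)})}(t) ≤ C(l) · d_{(a_k)}(t) for all t ≥ 0; equivalently, the decreasing rearrangement of (a_{l(k)})_{k=0}^{n-1} is dominated by the C(l)-fold dilation of (a_k)_{k=0}^{n-1}. -/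
/-- Distribution function of a finite tuple: `d_a(t) = Card {k : a k > t}`. -/
noncomputable def tupleDist {n : ℕ} (a : Fin n → ℝ) (t : ℝ) : ℕ :=
  (Finset.univ.filter fun k => t < a k).card

/-!
Since `a` is nonincreasing, `{k : a k > t}` is the initial segment `{k < m}` with
`m = d_a(t)`, so `d_{a∘l}(t)` counts the `k` with `l k ≤ m - 1`. By the definition of `C(l)`
(taking `r = m - 1`) there are at most `C(l) · m` of them.
-/

open Finset

section

variable {n : ℕ}

theorem tupleDist_le (a : Fin n → ℝ) (t : ℝ) : tupleDist a t ≤ n := by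
  simpa [tupleDist] using card_filter_le univ fun k : Fin n => t < a k

theorem Antitone.lt_iff_lt_tupleDist {a : Fin n → ℝ} (ha : Antitone a) (t : ℝ) (k : Fin n) :
    t < a k ↔ (k : ℕ) < tupleDist a t := by
  constructor
  · intro hk
    have hsub : Iic k ⊆ univ.filter fun j => t < a j := fun i hi => by
      simpa using hk.trans_le (ha (mem_Iic.mp hi))
    have := card_le_card hsub
    rw [Fin.card_Iic] at this
    exact Nat.lt_of_succ_le this
  · intro hk
    by_contra hnot
    have hsub : (univ.filter fun j => t < a j) ⊆ Iio k := fun i hi => by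
      simp only [mem_filter, mem_univ, true_and] at hi
      exact mem_Iio.mpr (lt_of_not_ge fun hki => hnot (hi.trans_le (ha hki)))
    have := card_le_card hsub
    simp only [Fin.card_Iio] at this
    exact absurd this (not_le.mpr hk)

theorem Antitone.tupleDist_comp {a : Fin n → ℝ} (ha : Antitone a) (l : Fin n → Fin n) (t : ℝ) :
    tupleDist (a ∘ l) t = (univ.filter fun k => (l k : ℕ) < tupleDist a t).card := by
  unfold tupleDist
  exact congrArg card (filter_congr fun k _ => ha.lt_iff_lt_tupleDist t (l k))

theorem card_filter_lt_le_sup'_mul (l : Fin n → Fin n) (hne : (univ : Finset (Fin n)).Nonempty)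
    {m : ℕ} (hm : m ≤ n) :
    ((univ.filter fun k => (l k : ℕ) < m).card : ℝ) ≤
      (univ.sup' hne fun r : Fin n => ((univ.filter fun k => l k ≤ r).card : ℝ) / ((r : ℕ) + 1))
        * m := by
  rcases m with _ | r
  · simp
  · have hr : r < n := by omega
    have hset : (univ.filter fun k => (l k : ℕ) < r + 1) = univ.filter fun k => l k ≤ ⟨r, hr⟩ :=
      filter_congr fun k _ => by rw [Fin.le_def, Nat.lt_succ_iff]
    have hsup := le_sup' (fun r : Fin n => ((univ.filter fun k => l k ≤ r).card : ℝ) / ((r : ℕ) + 1))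
      (mem_univ ⟨r, hr⟩)
    rw [div_le_iff₀ (by positivity)] at hsup
    rw [hset, Nat.cast_add_one]
    exact hsup

end

/-- for a nonincreasing nonnegative tuple `a` and any map
`l : {0,…,n-1} → {0,…,n-1}`, with
`C(l) = ⌈sup_{0 ≤ r < n} Card{k : l k ≤ r}/(r+1)⌉`, the distribution function of
`(a (l k))_k` satisfies `d_{a∘l}(t) ≤ C(l) · d_a(t)` for all `t ≥ 0`. -/
theorem stmt_7 (n : ℕ) (hn : 0 < n) (a : Fin n → ℝ)
    (hmono : ∀ i j : Fin n, i ≤ j → a j ≤ a i)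
    (l : Fin n → Fin n) :
    ∀ t : ℝ, 0 ≤ t →
      (tupleDist (a ∘ l) t : ℝ) ≤
        ⌈(Finset.univ.sup' (by simpa [Finset.univ_nonempty_iff] using Fin.pos_iff_nonempty.mp hn)
            fun r : Fin n =>
              ((Finset.univ.filter fun k => l k ≤ r).card : ℝ) / ((r : ℕ) + 1))⌉₊ *
          (tupleDist a t : ℝ) := by
  intro t _
  have ha : Antitone a := hmono
  rw [ha.tupleDist_comp]
  exact (card_filter_lt_le_sup'_mul l _ (tupleDist_le a t)).trans
    (mul_le_mul_of_nonneg_right (Nat.le_ceil _) (Nat.cast_nonneg _))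
end

section
/- Let (g_k)_{k=0}^{n-1} be nonnegative independent random variables on (0,1) with ∑_{k=0}^{n-1} m(supp g_k) ≤ 1, and let g = ⊕_{k=0}^{n-1} g_k be their disjoint sum. Then μ(g) ≤ σ₂ μ(max_{0 ≤ k < n} g_k), i.e. μ(t, g) ≤ μ(t/2, max_k g_k) for all t > 0. -/
open MeasureTheory ProbabilityTheory
open scoped ENNReal

/-- Lebesgue measure on `(0,1)`. -/
noncomputable def P : Measure ℝ := volume.restrict (Set.Ioo 0 1)

/-- Decreasing rearrangement associated to a distribution function `D`:
`s ↦ inf {λ ≥ 0 : D(λ) ≤ s}`. -/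
noncomputable def rearr (D : ℝ → ℝ≥0∞) (s : ℝ) : ℝ :=
  sInf {l : ℝ | 0 ≤ l ∧ D l ≤ ENNReal.ofReal s}

/-!
For independent events `A_k` with `q_k = m(A_k)` and `S = ∑ q_k ≤ 1`, the second Bonferroni
inequality gives `m(⋃ A_k) = 1 - ∏ (1 - q_k) ≥ S - S²/2 ≥ S/2`. Applied to the level sets
`A_k = {g_k > λ}`, whose total measure is at most `∑ m(supp g_k) ≤ 1` for `λ ≥ 0`, this says
that the distribution function of `⊕ g_k` is at most twice that of `max_k g_k`, which is the
claimed inequality between decreasing rearrangements.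
-/

theorem Finset.prod_one_sub_le_one_sub_sum_add_sq_div_two {ι : Type*} (s : Finset ι)
    (q : ι → ℝ) (h0 : ∀ i ∈ s, 0 ≤ q i) (h1 : ∀ i ∈ s, q i ≤ 1) :
    ∏ i ∈ s, (1 - q i) ≤ 1 - ∑ i ∈ s, q i + (∑ i ∈ s, q i) ^ 2 / 2 := by
  induction s using Finset.cons_induction with
  | empty => simp
  | cons a s _ ih =>
    rw [Finset.prod_cons, Finset.sum_cons]
    have h0a := h0 a (Finset.mem_cons_self a s)
    have h1a := h1 a (Finset.mem_cons_self a s)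
    have hS : 0 ≤ ∑ i ∈ s, q i :=
      Finset.sum_nonneg fun i hi => h0 i (Finset.mem_cons_of_mem hi)
    have ih' := mul_le_mul_of_nonneg_left
      (ih (fun i hi => h0 i (Finset.mem_cons_of_mem hi))
        (fun i hi => h1 i (Finset.mem_cons_of_mem hi))) (sub_nonneg.2 h1a)
    nlinarith

section Independence

variable {Ω ι : Type*} [MeasurableSpace Ω] {μ : Measure Ω}

theorem ProbabilityTheory.iIndepFun.iIndepSet_preimage {β : ι → Type*}
    {m : ∀ i, MeasurableSpace (β i)} {f : ∀ i, Ω → β i} (h : iIndepFun f μ)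
    (hf : ∀ i, Measurable (f i)) {S : ∀ i, Set (β i)} (hS : ∀ i, MeasurableSet (S i)) :
    iIndepSet (fun i => f i ⁻¹' S i) μ :=
  (iIndepSet_iff_meas_biInter fun i => hf i (hS i)).2 fun s =>
    h.measure_inter_preimage_eq_mul s fun i _ => hS i

variable [Fintype ι] {A : ι → Set Ω}

theorem ProbabilityTheory.iIndepSet.measureReal_iUnion (h : iIndepSet A μ)
    (hA : ∀ i, MeasurableSet (A i)) :
    μ.real (⋃ i, A i) = 1 - ∏ i, (1 - μ.real (A i)) := by
  have := h.isProbabilityMeasure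
  have hcompl : μ (⋂ i, (A i)ᶜ) = ∏ i, μ (A i)ᶜ := by
    simpa using (iIndepSet_iff A μ).1 h Finset.univ (f := fun i => (A i)ᶜ)
      fun i _ => (MeasurableSpace.measurableSet_generateFrom (Set.mem_singleton _)).compl
  rw [← compl_compl (⋃ i, A i), Set.compl_iUnion,
    probReal_compl_eq_one_sub (MeasurableSet.iInter fun i => (hA i).compl), measureReal_def,
    hcompl, ENNReal.toReal_prod]
  simp only [← measureReal_def, probReal_compl_eq_one_sub (hA _)]

theorem ProbabilityTheory.iIndepSet.sum_measure_le_two_mul_measure_iUnion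
    (h : iIndepSet A μ) (hA : ∀ i, MeasurableSet (A i)) (hsum : ∑ i, μ (A i) ≤ 1) :
    ∑ i, μ (A i) ≤ 2 * μ (⋃ i, A i) := by
  have := h.isProbabilityMeasure
  set S := ∑ i, μ.real (A i)
  have hS : S ≤ 1 := by
    simpa [S, measureReal_def, ENNReal.toReal_sum fun i _ => measure_ne_top μ (A i)] using
      ENNReal.toReal_mono ENNReal.one_ne_top hsum
  have hbonferroni := Finset.univ.prod_one_sub_le_one_sub_sum_add_sq_div_two
    (fun i => μ.real (A i)) (fun i _ => measureReal_nonneg) (fun i _ => measureReal_le_one)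
  have hS0 : 0 ≤ S := Finset.sum_nonneg fun i _ => measureReal_nonneg
  have hreal : S ≤ 2 * μ.real (⋃ i, A i) := by
    rw [h.measureReal_iUnion hA]
    nlinarith
  rwa [← ENNReal.toReal_le_toReal (ENNReal.sum_ne_top.2 fun i _ => measure_ne_top μ (A i))
    (ENNReal.mul_ne_top ENNReal.ofNat_ne_top (measure_ne_top μ _)), ENNReal.toReal_mul,
    ENNReal.toReal_sum fun i _ => measure_ne_top μ (A i)]

end Independence

theorem MeasureTheory.tendsto_measure_setOf_lt_atTop {α : Type*} [MeasurableSpace α]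
    (μ : Measure α) [IsFiniteMeasure μ] {f : α → ℝ} (hf : Measurable f) :
    Filter.Tendsto (fun l : ℝ => μ {x | l < f x}) Filter.atTop (nhds 0) := by
  have hempty : ⋂ l : ℝ, {x | l < f x} = ∅ :=
    Set.eq_empty_of_forall_notMem fun x hx =>
      lt_irrefl (f x) (Set.mem_iInter.1 hx (f x))
  simpa [hempty, Function.comp_def] using
    tendsto_measure_iInter_atTop (s := fun l : ℝ => {x | l < f x})
    (fun l => (hf measurableSet_Ioi).nullMeasurableSet)
    (fun a b hab x (hx : b < f x) => (hab.trans_lt hx : a < f x))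
    ⟨0, measure_ne_top μ _⟩

theorem rearr_mul_le_rearr {D E : ℝ → ℝ≥0∞} {c s : ℝ} (hc : 0 ≤ c)
    (hDE : ∀ l, 0 ≤ l → D l ≤ ENNReal.ofReal c * E l)
    (hE : ∃ l, 0 ≤ l ∧ E l ≤ ENNReal.ofReal s) :
    rearr D (c * s) ≤ rearr E s :=
  csInf_le_csInf ⟨0, fun _ hl => hl.1⟩ hE fun l ⟨hl0, hl⟩ =>
    ⟨hl0, (hDE l hl0).trans <| by rw [ENNReal.ofReal_mul hc]; gcongr⟩

theorem stmt_10_general (n : ℕ) (g : Fin n → ℝ → ℝ)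
    (hmeas : ∀ k, Measurable (g k))
    (hindep : iIndepFun g P)
    (hsupp : ∑ k, P {t | g k t ≠ 0} ≤ 1) :
    ∀ t : ℝ, 0 < t →
      rearr (fun l => ∑ k, P {x | l < g k x}) t ≤
        rearr (fun l => P {x | l < ⨆ k, g k x}) (t / 2) := by
  intro t ht
  have := hindep.isProbabilityMeasure
  have hlevel : ∀ l, 0 ≤ l →
      ∑ k, P {x | l < g k x} ≤ ENNReal.ofReal 2 * P {x | l < ⨆ k, g k x} := by
    intro l hl
    have hsum : ∑ k, P {x | l < g k x} ≤ 1 :=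
      (Finset.sum_le_sum fun k _ => measure_mono fun x (hx : l < g k x) =>
        (hl.trans_lt hx).ne').trans hsupp
    have hlevel_indep : iIndepSet (fun k => {x | l < g k x}) P :=
      hindep.iIndepSet_preimage hmeas fun _ => measurableSet_Ioi
    calc ∑ k, P {x | l < g k x} ≤ 2 * P (⋃ k, {x | l < g k x}) :=
          hlevel_indep.sum_measure_le_two_mul_measure_iUnion
            (fun k => hmeas k measurableSet_Ioi) hsum
      _ ≤ ENNReal.ofReal 2 * P {x | l < ⨆ k, g k x} := by
          rw [ENNReal.ofReal_ofNat]
          gcongr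
          exact Set.iUnion_subset fun k x (hx : l < g k x) =>
            hx.trans_le (le_ciSup (Set.finite_range fun k => g k x).bddAbove k)
  obtain ⟨l, hsmall, hl⟩ :=
    (((tendsto_measure_setOf_lt_atTop P (Measurable.iSup hmeas)).eventually
      (gt_mem_nhds (ENNReal.ofReal_pos.2 (half_pos ht)))).and (Filter.eventually_ge_atTop 0)).exists
  calc rearr _ t = rearr _ (2 * (t / 2)) := by rw [mul_div_cancel₀ t two_ne_zero]
    _ ≤ _ := rearr_mul_le_rearr zero_le_two hlevel ⟨l, hl, hsmall.le⟩

/-- Johnson–Schechtman: for nonnegative independent random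
variables `g_0,…,g_{n-1}` on `(0,1)` with `∑ m(supp g_k) ≤ 1` and disjoint sum
`g` (with distribution `λ ↦ ∑_k m{g_k > λ}`), one has
`μ(t, g) ≤ μ(t/2, max_k g_k)` for all `t > 0`. -/
theorem stmt_10 (n : ℕ) (hn : 0 < n) (g : Fin n → ℝ → ℝ)
    (hmeas : ∀ k, Measurable (g k)) (hpos : ∀ k t, 0 ≤ g k t)
    (hindep : iIndepFun g P)
    (hsupp : ∑ k, P {t | g k t ≠ 0} ≤ 1) :
    ∀ t : ℝ, 0 < t →
      rearr (fun l => ∑ k, P {x | l < g k x}) t ≤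
        rearr (fun l => P {x | l < ⨆ k, g k x}) (t / 2) :=
  stmt_10_general n g hmeas hindep hsupp
end

section
/- Let Ψ be an increasing function on [0,∞) with Ψ(0)=0 satisfying Ψ(2t) ≤ C_Ψ Ψ(t) for all t > 0. Let K be the Kruglov operator Kf(ω) = ∑_{n=1}^∞ ∑_{k=1}^n f(ω_k) χ_{A_n}(ω₀), where (A_n) are disjoint subsets of (0,1) with m(A_n) = 1/(e·n!) and the ω_k are independent uniform variables. Then for every nonnegative f ∈ L_Ψ(0,1), ∫₀¹ Ψ((Kf)(t)) dt ≤ (∑_{m=1}^∞ m^{c_Ψ+1}/(e·m!)) · ∫₀¹ Ψ(f(t)) dt, where c_Ψ = 2 log₂ C_Ψ; in particular the series converges and the constant depends only on Ψ. -/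
open MeasureTheory ProbabilityTheory
open scoped ENNReal

/-- The Kruglov operator `Kf(ω) = ∑_{n≥1} (∑_{k=1}^n f(ω_k)) χ_{A_n}(ω₀)`,
realized on a probability space carrying independent uniform variables
`W 0, W 1, W 2, …` (playing the roles of `ω₀, ω₁, ω₂, …`). -/
noncomputable def kruglov {Ω : Type*} (W : ℕ → Ω → ℝ) (A : ℕ → Set ℝ)
    (f : ℝ → ℝ) (ω : Ω) : ℝ :=
  ∑' n : ℕ, (∑ k ∈ Finset.Icc 1 n, f (W k ω)) * (A n).indicator (fun _ => (1 : ℝ)) (W 0 ω)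

/-!
On the event `{ω₀ ∈ A_n}` the operator is the sum of the `n` values `f(ω_k)`, and iterating
the `Δ₂`-condition `⌈log₂ n⌉` times gives
`Ψ(u₁ + ⋯ + u_n) ≤ C_Ψ^⌈log₂ n⌉ Ψ(max u_k) ≤ n^{c_Ψ} ∑ Ψ(u_k)`. As `ω₀` is independent of each `ω_k` and every `ω_k` is uniform, the integral of the right-hand
side over that event is `n^{c_Ψ} · n · ℙ(A_n) · ∫₀¹ Ψ(f)`. The events are disjoint, so summing
over `n` bounds `∫ Ψ(Kf)`; the series converges since `m^r ≤ ⌈r⌉! e^m`.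
-/

open scoped Nat

theorem summable_rpow_div_factorial (r : ℝ) : Summable fun m : ℕ => (m : ℝ) ^ r / m ! := by
  set N := ⌈r⌉₊
  have hle (m : ℕ) : (m : ℝ) ^ r ≤ N ! * Real.exp 1 ^ m := by
    rcases m.eq_zero_or_pos with rfl | hm
    · calc ((0 : ℕ) : ℝ) ^ r ≤ 1 := by simpa using Real.zero_rpow_le_one r
        _ ≤ N ! * Real.exp 1 ^ 0 := by rw [pow_zero, mul_one]; exact_mod_cast N.factorial_pos
    · have hm1 : (1 : ℝ) ≤ m := Nat.one_le_cast.mpr hm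
      calc (m : ℝ) ^ r ≤ (m : ℝ) ^ (N : ℝ) := Real.rpow_le_rpow_of_exponent_le hm1 (Nat.le_ceil r)
        _ ≤ N ! * Real.exp 1 ^ m := by
          rw [Real.rpow_natCast, Real.exp_one_pow, ← div_le_iff₀' (by positivity)]
          exact Real.pow_div_factorial_le_exp _ (by positivity) N
  refine Summable.of_nonneg_of_le (fun m => by positivity) (fun m => ?_)
    ((Real.summable_pow_div_factorial (Real.exp 1)).mul_left (N ! : ℝ))
  rw [← mul_div_assoc]
  gcongr
  exact hle m

theorem nonneg_of_monotoneOn_Ici {Ψ : ℝ → ℝ} (hmono : MonotoneOn Ψ (Set.Ici 0)) (hΨ0 : Ψ 0 = 0)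
    {t : ℝ} (ht : 0 ≤ t) : 0 ≤ Ψ t :=
  hΨ0 ▸ hmono Set.self_mem_Ici ht ht

theorem measurable_comp_of_monotoneOn_Ici {α : Type*} [MeasurableSpace α] {Ψ : ℝ → ℝ}
    (hmono : MonotoneOn Ψ (Set.Ici 0)) {f : α → ℝ} (hf : Measurable f) (hf0 : ∀ x, 0 ≤ f x) :
    Measurable fun x => Ψ (f x) := by
  have hext : Monotone fun t => Ψ (max t 0) := fun a b hab =>
    hmono (le_max_right a 0) (le_max_right b 0) (max_le_max_right 0 hab)
  have hcomp : (fun x => Ψ (f x)) = (fun t => Ψ (max t 0)) ∘ f :=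
    funext fun x => by simp [max_eq_left (hf0 x)]
  exact hcomp ▸ hext.measurable.comp hf

theorem apply_two_pow_mul_le_pow_mul {Ψ : ℝ → ℝ} {C : ℝ} (hC : 0 ≤ C) (hΨ0 : Ψ 0 = 0)
    (hΔ₂ : ∀ t : ℝ, 0 < t → Ψ (2 * t) ≤ C * Ψ t) (j : ℕ) {t : ℝ} (ht : 0 ≤ t) :
    Ψ (2 ^ j * t) ≤ C ^ j * Ψ t := by
  rcases ht.eq_or_lt with rfl | ht
  · simp [hΨ0]
  induction j with
  | zero => simp
  | succ j ih =>
    calc Ψ (2 ^ (j + 1) * t) = Ψ (2 * (2 ^ j * t)) := by ring_nf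
      _ ≤ C * Ψ (2 ^ j * t) := hΔ₂ _ (by positivity)
      _ ≤ C * (C ^ j * Ψ t) := by gcongr
      _ = C ^ (j + 1) * Ψ t := by ring

theorem Nat.clog_two_le_two_mul_logb {n : ℕ} (hn : 1 ≤ n) :
    (Nat.clog 2 n : ℝ) ≤ 2 * Real.logb 2 n := by
  rcases hn.eq_or_lt with rfl | hn
  · simp
  have hlt : ((Nat.clog 2 n - 1 : ℕ) : ℝ) < Real.logb 2 n := by
    rw [Real.lt_logb_iff_rpow_lt one_lt_two (by positivity), Real.rpow_natCast]
    exact_mod_cast Nat.pow_pred_clog_lt_self one_lt_two hn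
  have hone : 1 ≤ Real.logb 2 n := by
    rw [Real.le_logb_iff_rpow_le one_lt_two (by positivity), Real.rpow_one]
    exact_mod_cast hn
  have hpos : 0 < Nat.clog 2 n := Nat.clog_pos one_lt_two hn
  push_cast [Nat.cast_sub hpos] at hlt
  linarith

theorem pow_clog_two_le_rpow {C : ℝ} (hC : 1 ≤ C) {n : ℕ} (hn : 1 ≤ n) :
    C ^ Nat.clog 2 n ≤ (n : ℝ) ^ (2 * Real.logb 2 C) := by
  have hC0 : 0 < C := zero_lt_one.trans_le hC
  have hn0 : (0 : ℝ) < n := Nat.cast_pos.mpr hn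
  calc C ^ Nat.clog 2 n = C ^ (Nat.clog 2 n : ℝ) := (Real.rpow_natCast _ _).symm
    _ ≤ C ^ (2 * Real.logb 2 n) :=
      Real.rpow_le_rpow_of_exponent_le hC (Nat.clog_two_le_two_mul_logb hn)
    _ = (n : ℝ) ^ (2 * Real.logb 2 C) := by
      rw [Real.rpow_def_of_pos hC0, Real.rpow_def_of_pos hn0, Real.logb, Real.logb]
      ring_nf

theorem apply_sum_le_card_rpow_mul_sum {ι : Type*} (s : Finset ι) {Ψ : ℝ → ℝ} {C : ℝ}
    (hC : 1 ≤ C) (hΨ0 : Ψ 0 = 0) (hmono : MonotoneOn Ψ (Set.Ici 0))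
    (hΔ₂ : ∀ t : ℝ, 0 < t → Ψ (2 * t) ≤ C * Ψ t) {u : ι → ℝ} (hu : ∀ i ∈ s, 0 ≤ u i) :
    Ψ (∑ i ∈ s, u i) ≤ (s.card : ℝ) ^ (2 * Real.logb 2 C) * ∑ i ∈ s, Ψ (u i) := by
  rcases s.eq_empty_or_nonempty with rfl | hs
  · simp [hΨ0]
  have hΨnn {t : ℝ} : 0 ≤ t → 0 ≤ Ψ t := nonneg_of_monotoneOn_Ici hmono hΨ0
  obtain ⟨i₀, hi₀, hmax⟩ := s.exists_max_image u hs
  set j := Nat.clog 2 s.card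
  have hsum : ∑ i ∈ s, u i ≤ 2 ^ j * u i₀ :=
    calc ∑ i ∈ s, u i ≤ s.card • u i₀ := Finset.sum_le_card_nsmul _ _ _ hmax
      _ ≤ 2 ^ j * u i₀ := by
        rw [nsmul_eq_mul]
        gcongr
        · exact hu i₀ hi₀
        · exact_mod_cast Nat.le_pow_clog one_lt_two _
  calc Ψ (∑ i ∈ s, u i) ≤ Ψ (2 ^ j * u i₀) :=
        hmono (Finset.sum_nonneg hu) (mul_nonneg (by positivity) (hu i₀ hi₀)) hsum
    _ ≤ C ^ j * Ψ (u i₀) := apply_two_pow_mul_le_pow_mul (by linarith) hΨ0 hΔ₂ j (hu i₀ hi₀)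
    _ ≤ C ^ j * ∑ i ∈ s, Ψ (u i) := by
        gcongr
        exact Finset.single_le_sum (fun i hi => hΨnn (hu i hi)) hi₀
    _ ≤ (s.card : ℝ) ^ (2 * Real.logb 2 C) * ∑ i ∈ s, Ψ (u i) := by
        gcongr
        · exact Finset.sum_nonneg fun i hi => hΨnn (hu i hi)
        · exact pow_clog_two_le_rpow hC hs.card_pos

theorem ofReal_apply_sum_le_card_rpow_mul_sum {ι : Type*} (s : Finset ι) {Ψ : ℝ → ℝ} {C : ℝ}
    (hC : 1 ≤ C) (hΨ0 : Ψ 0 = 0) (hmono : MonotoneOn Ψ (Set.Ici 0))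
    (hΔ₂ : ∀ t : ℝ, 0 < t → Ψ (2 * t) ≤ C * Ψ t) {u : ι → ℝ} (hu : ∀ i ∈ s, 0 ≤ u i) :
    ENNReal.ofReal (Ψ (∑ i ∈ s, u i)) ≤
      ENNReal.ofReal ((s.card : ℝ) ^ (2 * Real.logb 2 C)) * ∑ i ∈ s, ENNReal.ofReal (Ψ (u i)) := by
  rw [← ENNReal.ofReal_sum_of_nonneg fun i hi => nonneg_of_monotoneOn_Ici hmono hΨ0 (hu i hi),
    ← ENNReal.ofReal_mul (by positivity)]
  exact ENNReal.ofReal_le_ofReal (apply_sum_le_card_rpow_mul_sum s hC hΨ0 hmono hΔ₂ hu)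

theorem ProbabilityTheory.IndepFun.setLIntegral_preimage_comp_eq_mul {Ω α β : Type*}
    [MeasurableSpace Ω] [MeasurableSpace α] [MeasurableSpace β] {μ : Measure Ω}
    {X : Ω → α} {Y : Ω → β} (hXY : IndepFun X Y μ) (hX : Measurable X) (hY : Measurable Y)
    {s : Set α} (hs : MeasurableSet s) {g : β → ℝ≥0∞} (hg : Measurable g) :
    ∫⁻ ω in X ⁻¹' s, g (Y ω) ∂μ = μ (X ⁻¹' s) * ∫⁻ ω, g (Y ω) ∂μ := by
  have hind : ∀ ω, (X ⁻¹' s).indicator (fun ω => g (Y ω)) ω = s.indicator 1 (X ω) * g (Y ω) :=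
    fun ω => by by_cases h : X ω ∈ s <;> simp [h]
  have hsplit := lintegral_mul_eq_lintegral_mul_lintegral_of_indepFun''
    ((measurable_one.indicator hs).comp hX).aemeasurable (hg.comp hY).aemeasurable
    (hXY.comp (measurable_one.indicator hs) hg)
  simp only [Function.comp_apply] at hsplit
  rw [← lintegral_indicator (hX hs), funext hind, hsplit]
  simp_rw [← Set.indicator_comp_right, Pi.one_comp]
  rw [lintegral_indicator_one (hX hs)]

section Kruglov

variable {Ω : Type*} {W : ℕ → Ω → ℝ} {A : ℕ → Set ℝ} {f : ℝ → ℝ} {ω : Ω}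

theorem kruglov_nonneg (hf : ∀ t, 0 ≤ f t) : 0 ≤ kruglov W A f ω :=
  tsum_nonneg fun _ => mul_nonneg (Finset.sum_nonneg fun _ _ => hf _)
    (Set.indicator_nonneg (fun _ _ => zero_le_one) _)

theorem kruglov_eq_sum_of_mem (hAdisj : ∀ m n, 1 ≤ m → 1 ≤ n → m ≠ n → Disjoint (A m) (A n))
    {n : ℕ} (hn : 1 ≤ n) (hω : W 0 ω ∈ A n) :
    kruglov W A f ω = ∑ k ∈ Finset.Icc 1 n, f (W k ω) := by
  rw [kruglov, tsum_eq_single n fun m hm => ?_, Set.indicator_of_mem hω, mul_one]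
  rcases m.eq_zero_or_pos with rfl | hm1
  · simp
  · rw [Set.indicator_of_notMem (Set.disjoint_right.mp (hAdisj m n hm1 hn hm) hω), mul_zero]

theorem kruglov_eq_zero_of_forall_notMem (hω : ∀ n, 1 ≤ n → W 0 ω ∉ A n) :
    kruglov W A f ω = 0 := by
  refine (tsum_congr fun n => ?_).trans tsum_zero
  rcases n.eq_zero_or_pos with rfl | hn
  · simp
  · rw [Set.indicator_of_notMem (hω n hn), mul_zero]

theorem ofReal_comp_kruglov_le_tsum
    (hAdisj : ∀ m n, 1 ≤ m → 1 ≤ n → m ≠ n → Disjoint (A m) (A n))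
    {Φ : ℝ → ℝ} (hΦ0 : Φ 0 = 0) (ω : Ω) :
    ENNReal.ofReal (Φ (kruglov W A f ω)) ≤ ∑' n, (W 0 ⁻¹' A n).indicator
      (fun ω => ENNReal.ofReal (Φ (∑ k ∈ Finset.Icc 1 n, f (W k ω)))) ω := by
  by_cases h : ∃ n, 1 ≤ n ∧ W 0 ω ∈ A n
  · obtain ⟨n, hn, hω⟩ := h
    refine le_trans (le_of_eq ?_) (ENNReal.le_tsum n)
    rw [kruglov_eq_sum_of_mem hAdisj hn hω, Set.indicator_of_mem (Set.mem_preimage.mpr hω)]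
  · push Not at h
    simp [kruglov_eq_zero_of_forall_notMem h, hΦ0]

end Kruglov

theorem setLIntegral_preimage_sum_comp_eq {Ω : Type*} [MeasurableSpace Ω] {Pr : Measure Ω}
    {W : ℕ → Ω → ℝ} (hWmeas : ∀ k, Measurable (W k)) (hWindep : iIndepFun W Pr)
    (hWunif : ∀ k, Pr.map (W k) = volume.restrict (Set.Ioo 0 1))
    {s : Set ℝ} (hs : MeasurableSet s) {g : ℝ → ℝ≥0∞} (hg : Measurable g) (n : ℕ) :
    ∫⁻ ω in W 0 ⁻¹' s, ∑ k ∈ Finset.Icc 1 n, g (W k ω) ∂Pr =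
      n * Pr (W 0 ⁻¹' s) * ∫⁻ t in Set.Ioo 0 1, g t := by
  have hterm : ∀ k ∈ Finset.Icc 1 n,
      ∫⁻ ω in W 0 ⁻¹' s, g (W k ω) ∂Pr = Pr (W 0 ⁻¹' s) * ∫⁻ t in Set.Ioo 0 1, g t := by
    intro k hk
    have h0k : (0 : ℕ) ≠ k := by grind
    rw [(hWindep.indepFun h0k).setLIntegral_preimage_comp_eq_mul (hWmeas 0) (hWmeas k) hs hg,
      ← lintegral_map hg (hWmeas k), hWunif k]
  rw [lintegral_finsetSum _ (f := fun k ω => g (W k ω)) fun k _ => hg.comp (hWmeas k),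
    Finset.sum_congr rfl hterm, Finset.sum_const, Nat.card_Icc, Nat.add_sub_cancel, nsmul_eq_mul,
    mul_assoc]

theorem lintegral_comp_kruglov_le {Ω : Type*} [MeasurableSpace Ω] {Pr : Measure Ω}
    {W : ℕ → Ω → ℝ} (hWmeas : ∀ k, Measurable (W k)) (hWindep : iIndepFun W Pr)
    (hWunif : ∀ k, Pr.map (W k) = volume.restrict (Set.Ioo 0 1))
    {A : ℕ → Set ℝ} (hAmeas : ∀ n, MeasurableSet (A n))
    (hAsub : ∀ n, 1 ≤ n → A n ⊆ Set.Ioo 0 1)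
    (hAdisj : ∀ m n, 1 ≤ m → 1 ≤ n → m ≠ n → Disjoint (A m) (A n))
    (hAvol : ∀ n, 1 ≤ n → volume (A n) = ENNReal.ofReal (1 / (Real.exp 1 * n !)))
    {Ψ : ℝ → ℝ} {C : ℝ} (hC : 1 ≤ C) (hΨ0 : Ψ 0 = 0) (hmono : MonotoneOn Ψ (Set.Ici 0))
    (hΔ₂ : ∀ t : ℝ, 0 < t → Ψ (2 * t) ≤ C * Ψ t)
    {f : ℝ → ℝ} (hfmeas : Measurable f) (hfpos : ∀ t, 0 ≤ f t) :
    ∫⁻ ω, ENNReal.ofReal (Ψ (kruglov W A f ω)) ∂Pr ≤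
      (∑' n : ℕ, ENNReal.ofReal ((n : ℝ) ^ (2 * Real.logb 2 C + 1) / (Real.exp 1 * n !))) *
        ∫⁻ t in Set.Ioo 0 1, ENNReal.ofReal (Ψ (f t)) := by
  set c := 2 * Real.logb 2 C
  set g : ℝ → ℝ≥0∞ := fun t => ENNReal.ofReal (Ψ (f t))
  have hg : Measurable g := (measurable_comp_of_monotoneOn_Ici hmono hfmeas hfpos).ennreal_ofReal
  have hB (n : ℕ) : MeasurableSet (W 0 ⁻¹' A n) := hWmeas 0 (hAmeas n)
  have hPrB (n : ℕ) (hn : 1 ≤ n) : Pr (W 0 ⁻¹' A n) = ENNReal.ofReal (1 / (Real.exp 1 * n !)) := by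
    rw [← Measure.map_apply (hWmeas 0) (hAmeas n), hWunif 0, Measure.restrict_apply (hAmeas n),
      Set.inter_eq_self_of_subset_left (hAsub n hn), hAvol n hn]
  have hS (n : ℕ) : Measurable fun ω => ∑ k ∈ Finset.Icc 1 n, g (W k ω) :=
    Finset.measurable_sum _ fun k _ => hg.comp (hWmeas k)
  have hterm (n : ℕ) (ω : Ω) :
      (W 0 ⁻¹' A n).indicator (fun ω => ENNReal.ofReal (Ψ (∑ k ∈ Finset.Icc 1 n, f (W k ω)))) ω ≤
        ENNReal.ofReal ((n : ℝ) ^ c) *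
          (W 0 ⁻¹' A n).indicator (fun ω => ∑ k ∈ Finset.Icc 1 n, g (W k ω)) ω := by
    by_cases hω : ω ∈ W 0 ⁻¹' A n
    · simpa [hω, g] using ofReal_apply_sum_le_card_rpow_mul_sum (Finset.Icc 1 n) hC hΨ0 hmono hΔ₂
        (u := fun k => f (W k ω)) fun k _ => hfpos _
    · simp [hω]
  have hconst (n : ℕ) : ENNReal.ofReal ((n : ℝ) ^ c) * (n * Pr (W 0 ⁻¹' A n)) ≤
      ENNReal.ofReal ((n : ℝ) ^ (c + 1) / (Real.exp 1 * n !)) := by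
    rcases n.eq_zero_or_pos with rfl | hn
    · simp
    rw [hPrB n hn, ← ENNReal.ofReal_natCast, ← ENNReal.ofReal_mul (by positivity),
      ← ENNReal.ofReal_mul (by positivity), Real.rpow_add_one (by positivity)]
    exact le_of_eq (congrArg ENNReal.ofReal (by ring))
  calc ∫⁻ ω, ENNReal.ofReal (Ψ (kruglov W A f ω)) ∂Pr
      ≤ ∫⁻ ω, ∑' n : ℕ, ENNReal.ofReal ((n : ℝ) ^ c) *
          (W 0 ⁻¹' A n).indicator (fun ω => ∑ k ∈ Finset.Icc 1 n, g (W k ω)) ω ∂Pr :=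
        lintegral_mono fun ω =>
          (ofReal_comp_kruglov_le_tsum hAdisj hΨ0 ω).trans (ENNReal.tsum_le_tsum (hterm · ω))
    _ = ∑' n : ℕ, ENNReal.ofReal ((n : ℝ) ^ c) *
          (n * Pr (W 0 ⁻¹' A n) * ∫⁻ t in Set.Ioo 0 1, g t) := by
        rw [lintegral_tsum fun n => (((hS n).indicator (hB n)).const_mul _).aemeasurable]
        refine tsum_congr fun n => ?_
        rw [lintegral_const_mul _ ((hS n).indicator (hB n)), lintegral_indicator (hB n),
          setLIntegral_preimage_sum_comp_eq hWmeas hWindep hWunif (hAmeas n) hg]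
    _ ≤ ∑' n : ℕ, ENNReal.ofReal ((n : ℝ) ^ (c + 1) / (Real.exp 1 * n !)) *
          ∫⁻ t in Set.Ioo 0 1, g t :=
        ENNReal.tsum_le_tsum fun n => by
          rw [← mul_assoc]
          gcongr
          exact hconst n
    _ = _ := ENNReal.tsum_mul_right

theorem stmt_16_general {Ω : Type*} [MeasurableSpace Ω] (Pr : Measure Ω)
    (W : ℕ → Ω → ℝ) (hWmeas : ∀ k, Measurable (W k))
    (hWindep : iIndepFun W Pr)
    (hWunif : ∀ k, Pr.map (W k) = volume.restrict (Set.Ioo 0 1))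
    (A : ℕ → Set ℝ) (hAmeas : ∀ n, MeasurableSet (A n))
    (hAsub : ∀ n, 1 ≤ n → A n ⊆ Set.Ioo 0 1)
    (hAdisj : ∀ m n, 1 ≤ m → 1 ≤ n → m ≠ n → Disjoint (A m) (A n))
    (hAvol : ∀ n, 1 ≤ n →
      volume (A n) = ENNReal.ofReal (1 / (Real.exp 1 * n.factorial)))
    (Ψ : ℝ → ℝ) (CΨ : ℝ) (hC : 1 ≤ CΨ) (hΨ0 : Ψ 0 = 0)
    (hmono : MonotoneOn Ψ (Set.Ici 0))
    (hΔ₂ : ∀ t : ℝ, 0 < t → Ψ (2 * t) ≤ CΨ * Ψ t)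
    (f : ℝ → ℝ) (hfmeas : Measurable f) (hfpos : ∀ t, 0 ≤ f t)
    (hfint : IntegrableOn (fun t => Ψ (f t)) (Set.Ioo 0 1)) :
    Summable (fun m : ℕ =>
      (m : ℝ) ^ (2 * Real.logb 2 CΨ + 1) / (Real.exp 1 * m.factorial)) ∧
    ∫ ω, Ψ (kruglov W A f ω) ∂Pr ≤
      (∑' m : ℕ, (m : ℝ) ^ (2 * Real.logb 2 CΨ + 1) / (Real.exp 1 * m.factorial)) *
        ∫ t in Set.Ioo (0 : ℝ) 1, Ψ (f t) := by
  have hΨnn {t : ℝ} : 0 ≤ t → 0 ≤ Ψ t := nonneg_of_monotoneOn_Ici hmono hΨ0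
  have hsum : Summable fun m : ℕ =>
      (m : ℝ) ^ (2 * Real.logb 2 CΨ + 1) / (Real.exp 1 * m.factorial) := by
    simpa only [div_mul_eq_div_div_swap] using
      (summable_rpow_div_factorial _).div_const (Real.exp 1)
  refine ⟨hsum, ?_⟩
  -- Without integrability the left-hand side is the junk value `0`.
  by_cases hK : Integrable (fun ω => Ψ (kruglov W A f ω)) Pr
  swap
  · rw [integral_undef hK]
    exact mul_nonneg (tsum_nonneg fun m => by positivity)
      (setIntegral_nonneg measurableSet_Ioo fun t _ => hΨnn (hfpos t))
  rw [integral_eq_lintegral_of_nonneg_ae (ae_of_all _ fun ω => hΨnn (kruglov_nonneg hfpos))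
      hK.aestronglyMeasurable,
    integral_eq_lintegral_of_nonneg_ae (ae_of_all _ fun t => hΨnn (hfpos t))
      hfint.aestronglyMeasurable,
    ← ENNReal.toReal_ofReal (tsum_nonneg fun m => by positivity), ← ENNReal.toReal_mul]
  refine ENNReal.toReal_mono (ENNReal.mul_ne_top ENNReal.ofReal_ne_top
    hfint.lintegral_lt_top.ne) ?_
  rw [ENNReal.ofReal_tsum_of_nonneg (fun m => by positivity) hsum]
  exact lintegral_comp_kruglov_le hWmeas hWindep hWunif hAmeas hAsub hAdisj hAvol hC hΨ0 hmono
    hΔ₂ hfmeas hfpos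

/-- for an increasing `Δ₂` function `Ψ` with `Ψ(0) = 0` and the
Kruglov operator `K` (built from disjoint sets `A_n ⊂ (0,1)` of measure
`1/(e·n!)`), for every nonnegative `f ∈ L_Ψ(0,1)` one has
`∫ Ψ(Kf) ≤ (∑_{m≥1} m^{c_Ψ+1}/(e·m!)) ∫₀¹ Ψ(f)` with `c_Ψ = 2 log₂ C_Ψ`;
in particular the series converges. -/
theorem stmt_16 {Ω : Type*} [MeasurableSpace Ω] (Pr : Measure Ω) [IsProbabilityMeasure Pr]
    (W : ℕ → Ω → ℝ) (hWmeas : ∀ k, Measurable (W k))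
    (hWindep : iIndepFun W Pr)
    (hWunif : ∀ k, Pr.map (W k) = volume.restrict (Set.Ioo 0 1))
    (A : ℕ → Set ℝ) (hAmeas : ∀ n, MeasurableSet (A n))
    (hAsub : ∀ n, 1 ≤ n → A n ⊆ Set.Ioo 0 1)
    (hAdisj : ∀ m n, 1 ≤ m → 1 ≤ n → m ≠ n → Disjoint (A m) (A n))
    (hAvol : ∀ n, 1 ≤ n →
      volume (A n) = ENNReal.ofReal (1 / (Real.exp 1 * n.factorial)))
    (Ψ : ℝ → ℝ) (CΨ : ℝ) (hC : 1 ≤ CΨ) (hΨ0 : Ψ 0 = 0)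
    (hmono : MonotoneOn Ψ (Set.Ici 0))
    (hΔ₂ : ∀ t : ℝ, 0 < t → Ψ (2 * t) ≤ CΨ * Ψ t)
    (f : ℝ → ℝ) (hfmeas : Measurable f) (hfpos : ∀ t, 0 ≤ f t)
    (hfint : IntegrableOn (fun t => Ψ (f t)) (Set.Ioo 0 1)) :
    Summable (fun m : ℕ =>
      (m : ℝ) ^ (2 * Real.logb 2 CΨ + 1) / (Real.exp 1 * m.factorial)) ∧
    ∫ ω, Ψ (kruglov W A f ω) ∂Pr ≤
      (∑' m : ℕ, (m : ℝ) ^ (2 * Real.logb 2 CΨ + 1) / (Real.exp 1 * m.factorial)) *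
        ∫ t in Set.Ioo (0 : ℝ) 1, Ψ (f t) :=
  stmt_16_general Pr W hWmeas hWindep hWunif A hAmeas hAsub hAdisj hAvol Ψ CΨ hC hΨ0 hmono hΔ₂ f
    hfmeas hfpos hfint
end

section
/- For every p ≥ 1, the L_p-norm of a Poisson random variable π with parameter 1 satisfies ‖π‖_p ≈ p / log(ep), i.e. there exist absolute constants 0 < c < C such that c·p/log(ep) ≤ (𝔼 π^p)^{1/p} ≤ C·p/log(ep) for all p ≥ 1. -/
/-!
Upper bound: `x ^ p ≤ (p / (e t)) ^ p * exp (t x)` for every `t > 0` (from `y ≤ exp (y - 1)`),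
so `𝔼 π ^ p ≤ (p / (e t)) ^ p * 𝔼 exp (t π) = (p / (e t)) ^ p * exp (exp t - 1)`; take
`t = log (e p)`. Lower bound: `𝔼 π ^ p ≥ m ^ p / (e m!) ≥ m ^ p / (e m ^ m)` for the single atom
`m = ⌈p / log (e p)⌉`, which satisfies `m log m ≤ 2 p`.
-/

open Real

theorem rpow_le_div_mul_exp {p t x : ℝ} (hp : 0 < p) (ht : 0 < t) (hx : 0 ≤ x) :
    x ^ p ≤ (p / (exp 1 * t)) ^ p * exp (t * x) := by
  set y := t * x / p
  have hy : 0 ≤ y := by positivity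
  have hxy : x = p / t * y := by simp only [y]; field_simp
  have hyp : y ^ p ≤ exp (t * x) / exp p := by
    calc y ^ p ≤ exp (y - 1) ^ p := rpow_le_rpow hy (by linarith [add_one_le_exp (y - 1)]) hp.le
      _ = exp (t * x) / exp p := by
        rw [← exp_mul, ← exp_sub]; congr 1; simp only [y]; field_simp
  calc x ^ p = (p / t) ^ p * y ^ p := by rw [hxy, mul_rpow (by positivity) hy]
    _ ≤ (p / t) ^ p * (exp (t * x) / exp p) := by gcongr
    _ = (p / (exp 1 * t)) ^ p * exp (t * x) := by
      rw [mul_comm (exp 1), ← div_div, div_rpow (by positivity) (exp_pos 1).le, exp_one_rpow]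
      ring

theorem hasSum_exp_mul_div_factorial (t : ℝ) :
    HasSum (fun n : ℕ => exp (t * n) / n.factorial) (exp (exp t)) := by
  simp_rw [mul_comm t, exp_nat_mul]
  rw [exp_eq_exp_ℝ]
  exact NormedSpace.expSeries_div_hasSum_exp _

/-- `𝔼 π ^ p` for a Poisson random variable `π` of parameter `1`. -/
noncomputable def poissonMoment (p : ℝ) : ℝ :=
  ∑' n : ℕ, (n : ℝ) ^ p / (exp 1 * n.factorial)

section

variable {p : ℝ}

theorem poisson_rpow_le (hp : 0 < p) {t : ℝ} (ht : 0 < t) (n : ℕ) :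
    (n : ℝ) ^ p / (exp 1 * n.factorial) ≤
      (p / (exp 1 * t)) ^ p / exp 1 * (exp (t * n) / n.factorial) := by
  calc (n : ℝ) ^ p / (exp 1 * n.factorial)
      ≤ (p / (exp 1 * t)) ^ p * exp (t * n) / (exp 1 * n.factorial) := by
        gcongr; exact rpow_le_div_mul_exp hp ht n.cast_nonneg
    _ = _ := by ring

theorem summable_poisson_rpow (hp : 0 < p) :
    Summable fun n : ℕ => (n : ℝ) ^ p / (exp 1 * n.factorial) :=
  .of_nonneg_of_le (fun _ => by positivity) (poisson_rpow_le hp one_pos)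
    ((hasSum_exp_mul_div_factorial 1).summable.mul_left _)

theorem poissonMoment_le (hp : 0 < p) {t : ℝ} (ht : 0 < t) :
    poissonMoment p ≤ (p / (exp 1 * t)) ^ p * exp (exp t - 1) := by
  calc poissonMoment p
      ≤ ∑' n : ℕ, (p / (exp 1 * t)) ^ p / exp 1 * (exp (t * n) / n.factorial) :=
        (summable_poisson_rpow hp).tsum_le_tsum (poisson_rpow_le hp ht)
          ((hasSum_exp_mul_div_factorial t).summable.mul_left _)
    _ = (p / (exp 1 * t)) ^ p * exp (exp t - 1) := by
        rw [tsum_mul_left, (hasSum_exp_mul_div_factorial t).tsum_eq, exp_sub]; ring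

theorem pow_div_pow_self_le_poissonMoment (hp : 0 < p) (m : ℕ) :
    (m : ℝ) ^ p / (exp 1 * m ^ m) ≤ poissonMoment p :=
  calc (m : ℝ) ^ p / (exp 1 * m ^ m) ≤ (m : ℝ) ^ p / (exp 1 * m.factorial) := by
        gcongr; exact_mod_cast m.factorial_le_pow
    _ ≤ poissonMoment p :=
        (summable_poisson_rpow hp).le_tsum m fun _ _ => by positivity

theorem log_exp_one_mul (hp : 0 < p) : log (exp 1 * p) = 1 + log p := by
  rw [log_mul (exp_pos 1).ne' hp.ne', log_exp]

theorem one_le_log_exp_one_mul (hp : 1 ≤ p) : 1 ≤ log (exp 1 * p) := by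
  rw [log_exp_one_mul (one_pos.trans_le hp)]; linarith [log_nonneg hp]

theorem poissonMoment_rpow_le (hp : 1 ≤ p) :
    poissonMoment p ^ (1 / p) ≤ exp (exp 1 - 1) * (p / log (exp 1 * p)) := by
  have hp0 : 0 < p := one_pos.trans_le hp
  set L := log (exp 1 * p)
  have hL0 : 0 < L := one_pos.trans_le (one_le_log_exp_one_mul hp)
  have hexpL : exp L = exp 1 * p := exp_log (by positivity)
  have hbound := poissonMoment_le hp0 hL0
  rw [hexpL] at hbound
  calc poissonMoment p ^ (1 / p)
      ≤ ((p / (exp 1 * L)) ^ p * exp (exp 1 * p - 1)) ^ (1 / p) :=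
        rpow_le_rpow (tsum_nonneg fun _ => by positivity) hbound (by positivity)
    _ = p / (exp 1 * L) * exp ((exp 1 * p - 1) / p) := by
        rw [mul_rpow (by positivity) (exp_pos _).le, ← rpow_mul (by positivity),
          mul_one_div_cancel hp0.ne', rpow_one, ← exp_mul, mul_one_div]
    _ ≤ p / (exp 1 * L) * exp (exp 1) := by
        gcongr
        rw [div_le_iff₀ hp0]; nlinarith [exp_pos 1]
    _ = exp (exp 1 - 1) * (p / L) := by rw [exp_sub]; ring

theorem exp_neg_three_mul_natCast_le_poissonMoment_rpow (hp : 1 ≤ p) {m : ℕ} (hm : 1 ≤ m)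
    (hmlog : m * log m ≤ 2 * p) : exp (-3) * m ≤ poissonMoment p ^ (1 / p) := by
  have hp0 : 0 < p := one_pos.trans_le hp
  have hm0 : (0 : ℝ) < m := by exact_mod_cast hm
  have hterm : (m : ℝ) ^ p / (exp 1 * m ^ m) = exp (p * log m - (1 + m * log m)) := by
    rw [exp_sub, exp_add, ← exp_log hm0, ← exp_mul, ← exp_nat_mul, exp_log hm0, mul_comm p]
  calc exp (-3) * m = exp (log m - 3) := by rw [exp_sub, exp_log hm0, exp_neg]; ring
    _ ≤ exp (p * log m - (1 + m * log m)) ^ (1 / p) := by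
        have h3 : (1 + m * log m) / p ≤ 3 := by rw [div_le_iff₀ hp0]; linarith
        rw [← exp_mul, exp_le_exp, sub_mul, mul_one_div, mul_one_div,
          mul_div_cancel_left₀ _ hp0.ne']
        linarith
    _ ≤ poissonMoment p ^ (1 / p) := by
        rw [← hterm]
        exact rpow_le_rpow (by positivity) (pow_div_pow_self_le_poissonMoment hp0 m)
          (by positivity)

theorem natCeil_div_log_mul_log_le (hp : 1 ≤ p) :
    (⌈p / log (exp 1 * p)⌉₊ : ℝ) * log ⌈p / log (exp 1 * p)⌉₊ ≤ 2 * p := by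
  set L := log (exp 1 * p)
  set m := ⌈p / L⌉₊
  have hp0 : 0 < p := one_pos.trans_le hp
  have hL1 : 1 ≤ L := one_le_log_exp_one_mul hp
  have hLp : L = 1 + log p := log_exp_one_mul hp0
  have hx1 : 1 ≤ p / L := by
    rw [le_div_iff₀ (by linarith), one_mul, hLp]
    linarith [log_le_sub_one_of_pos hp0]
  have hm1 : (1 : ℝ) ≤ m := by exact_mod_cast Nat.one_le_ceil_iff.mpr (by linarith)
  have hmx : (m : ℝ) ≤ 2 * (p / L) := by
    linarith [Nat.ceil_lt_add_one (show 0 ≤ p / L by linarith)]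
  have hlogm : log m ≤ L := by
    calc log m ≤ log (2 * p) := log_le_log (by linarith) (hmx.trans (by
            gcongr; exact div_le_self hp0.le hL1))
      _ = log 2 + log p := log_mul two_ne_zero hp0.ne'
      _ ≤ L := by rw [hLp]; linarith [log_le_sub_one_of_pos two_pos]
  calc m * log m ≤ 2 * (p / L) * L := mul_le_mul hmx hlogm (log_nonneg hm1) (by positivity)
    _ = 2 * p := by rw [mul_assoc, div_mul_cancel₀ _ (one_pos.trans_le hL1).ne']

theorem exp_neg_three_mul_le_poissonMoment_rpow (hp : 1 ≤ p) :
    exp (-3) * (p / log (exp 1 * p)) ≤ poissonMoment p ^ (1 / p) := by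
  have hx : 0 < p / log (exp 1 * p) :=
    div_pos (one_pos.trans_le hp) (one_pos.trans_le (one_le_log_exp_one_mul hp))
  exact (mul_le_mul_of_nonneg_left (Nat.le_ceil _) (exp_pos _).le).trans
    (exp_neg_three_mul_natCast_le_poissonMoment_rpow hp (Nat.one_le_ceil_iff.mpr hx)
      (natCeil_div_log_mul_log_le hp))

end

/-- the `L_p`-norm of a Poisson random variable `π` with
parameter `1` (i.e. `ℙ(π = n) = 1/(e·n!)`) satisfies
`(𝔼 π^p)^{1/p} ≈ p / log(ep)` uniformly in `p ≥ 1`. -/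
theorem stmt_18 :
    ∃ c C : ℝ, 0 < c ∧ c ≤ C ∧
      ∀ p : ℝ, 1 ≤ p →
        c * (p / Real.log (Real.exp 1 * p)) ≤
            (∑' n : ℕ, (n : ℝ) ^ p / (Real.exp 1 * n.factorial)) ^ (1 / p) ∧
          (∑' n : ℕ, (n : ℝ) ^ p / (Real.exp 1 * n.factorial)) ^ (1 / p) ≤
            C * (p / Real.log (Real.exp 1 * p)) := by
  refine ⟨exp (-3), exp (exp 1 - 1), exp_pos _, exp_le_exp.mpr ?_, fun p hp =>
    ⟨exp_neg_three_mul_le_poissonMoment_rpow hp, poissonMoment_rpow_le hp⟩⟩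
  linarith [add_one_le_exp 1]
end
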